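/- If a bilinear form a on a real Hilbert space H satisfies a(v, v) ≥ α‖v‖² for some α > 0 and all v, and a sequence (x_n) satisfies ⟨(x_{n+1} − x_n)/Δt, x_{n+1}⟩ + a(x_{n+1}, x_{n+1}) ≤ κ‖x_{n+1}‖² + c_n for all n < N with κΔt < 1, then ‖x_N‖² + 2αΔt Σ_{n=0}^{N−1} ‖x_{n+1}‖² ≤ exp(2κ N Δt/(1 − 2κΔt))·(‖x_0‖² + 2Δt Σ_{n=0}^{N−1} c_n), provided 2κΔt < 1. -/

import Mathlib

theorem stmt_8 {H : Type*} [NormedAddCommGroup H] [InnerProductSpace ℝ H] [CompleteSpace H]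
    (a : H →ₗ[ℝ] H →ₗ[ℝ] ℝ) (α Δt κ : ℝ) (N : ℕ) (x : ℕ → H) (c : ℕ → ℝ)
    (hα : 0 < α) (hcoer : ∀ v : H, α * ‖v‖ ^ 2 ≤ a v v)
    (hΔt : 0 < Δt) (hκ : 0 ≤ κ) (hc : ∀ n, 0 ≤ c n)
    (hstep : ∀ n < N,
      (inner ℝ (x (n + 1) - x n) (x (n + 1)) : ℝ) / Δt + a (x (n + 1)) (x (n + 1))
        ≤ κ * ‖x (n + 1)‖ ^ 2 + c n)
    (h1 : κ * Δt < 1) (h2 : 2 * κ * Δt < 1) :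
    ‖x N‖ ^ 2 + 2 * α * Δt * ∑ n ∈ Finset.range N, ‖x (n + 1)‖ ^ 2
      ≤ Real.exp (2 * κ * N * Δt / (1 - 2 * κ * Δt)) *
          (‖x 0‖ ^ 2 + 2 * Δt * ∑ n ∈ Finset.range N, c n) := by
  have h1s : (0:ℝ) < 1 - 2*κ*Δt := by linarith
  have hsΔ : 0 ≤ 2*κ*Δt := by positivity
  have key : ∀ u v : H, (‖u‖^2 - ‖v‖^2)/2 ≤ (inner ℝ (u - v) u : ℝ) := by
    intro u v
    have h1' : (inner ℝ (u - v) u : ℝ) = ‖u‖^2 - inner ℝ v u := by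
      rw [inner_sub_left, real_inner_self_eq_norm_sq]
    have h2' : (inner ℝ v u : ℝ) ≤ ‖v‖ * ‖u‖ := real_inner_le_norm v u
    nlinarith [sq_nonneg (‖u‖ - ‖v‖)]
  set lam : ℝ := (1 - 2*κ*Δt)⁻¹ with hlam
  have hlam1 : 1 ≤ lam := by
    rw [hlam]
    rw [le_inv_comm₀ one_pos h1s]
    simp; linarith
  have hlam0 : 0 ≤ lam := zero_le_one.trans hlam1
  have main : ∀ n, n ≤ N →
      ‖x n‖^2 + 2*α*Δt*∑ k ∈ Finset.range n, ‖x (k+1)‖^2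
        ≤ lam^n * (‖x 0‖^2 + 2*Δt*∑ k ∈ Finset.range n, c k) := by
    intro n
    induction n with
    | zero => intro _; simp
    | succ n ih =>
      intro hn
      have hnN : n < N := hn
      have ihn := ih hnN.le
      have hr : (inner ℝ (x (n+1) - x n) (x (n+1)) : ℝ)
          ≤ (κ*‖x (n+1)‖^2 + c n - a (x (n+1)) (x (n+1))) * Δt := by
        rw [← div_le_iff₀ hΔt]
        linarith [hstep n hnN]
      have hco := mul_le_mul_of_nonneg_right (hcoer (x (n+1))) hΔt.le
      have hkey := key (x (n+1)) (x n)
      have hineq : ‖x (n+1)‖^2 + 2*α*Δt*‖x (n+1)‖^2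
          ≤ ‖x n‖^2 + 2*κ*Δt*‖x (n+1)‖^2 + 2*Δt*c n := by nlinarith
      rw [Finset.sum_range_succ, Finset.sum_range_succ]
      have hA : (0:ℝ) ≤ ∑ k ∈ Finset.range n, ‖x (k+1)‖^2 :=
        Finset.sum_nonneg fun _ _ => sq_nonneg _
      have hpos : (0:ℝ) ≤ 2*α*Δt*((∑ k ∈ Finset.range n, ‖x (k+1)‖^2) + ‖x (n+1)‖^2) := by
        have : (0:ℝ) ≤ (∑ k ∈ Finset.range n, ‖x (k+1)‖^2) + ‖x (n+1)‖^2 :=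
          add_nonneg hA (sq_nonneg _)
        positivity
      have hstep2 : (1 - 2*κ*Δt) *
          (‖x (n+1)‖^2 + 2*α*Δt*((∑ k ∈ Finset.range n, ‖x (k+1)‖^2) + ‖x (n+1)‖^2))
          ≤ (‖x n‖^2 + 2*α*Δt*∑ k ∈ Finset.range n, ‖x (k+1)‖^2) + 2*Δt*c n := by
        nlinarith [mul_nonneg hsΔ hpos]
      have hE3 : ‖x (n+1)‖^2 + 2*α*Δt*((∑ k ∈ Finset.range n, ‖x (k+1)‖^2) + ‖x (n+1)‖^2)
          ≤ lam * ((‖x n‖^2 + 2*α*Δt*∑ k ∈ Finset.range n, ‖x (k+1)‖^2) + 2*Δt*c n) := by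
        rw [hlam]
        have h : ‖x (n+1)‖^2 + 2*α*Δt*((∑ k ∈ Finset.range n, ‖x (k+1)‖^2) + ‖x (n+1)‖^2)
            ≤ ((‖x n‖^2 + 2*α*Δt*∑ k ∈ Finset.range n, ‖x (k+1)‖^2) + 2*Δt*c n) / (1-2*κ*Δt) := by
          rw [le_div_iff₀ h1s]
          nlinarith [hstep2]
        calc ‖x (n+1)‖^2 + 2*α*Δt*((∑ k ∈ Finset.range n, ‖x (k+1)‖^2) + ‖x (n+1)‖^2)
            ≤ ((‖x n‖^2 + 2*α*Δt*∑ k ∈ Finset.range n, ‖x (k+1)‖^2) + 2*Δt*c n) / (1-2*κ*Δt) := h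
          _ = (1-2*κ*Δt)⁻¹ * ((‖x n‖^2 + 2*α*Δt*∑ k ∈ Finset.range n, ‖x (k+1)‖^2) + 2*Δt*c n) := by
              ring
      have hlamn : 1 ≤ lam^n := one_le_pow₀ hlam1
      calc ‖x (n+1)‖^2 + 2*α*Δt*((∑ k ∈ Finset.range n, ‖x (k+1)‖^2) + ‖x (n+1)‖^2)
          ≤ lam * ((‖x n‖^2 + 2*α*Δt*∑ k ∈ Finset.range n, ‖x (k+1)‖^2) + 2*Δt*c n) := hE3
        _ ≤ lam * (lam^n * (‖x 0‖^2 + 2*Δt*∑ k ∈ Finset.range n, c k) + 2*Δt*c n) := by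
            apply mul_le_mul_of_nonneg_left _ hlam0
            linarith [ihn]
        _ ≤ lam^(n+1) * ((‖x 0‖^2 + 2*Δt*∑ k ∈ Finset.range n, c k) + 2*Δt*c n) := by
            have hcn : (0:ℝ) ≤ 2*Δt*c n := by
              have := hc n; positivity
            have h2' : lam*(2*Δt*c n) ≤ lam^(n+1)*(2*Δt*c n) := by
              apply mul_le_mul_of_nonneg_right _ hcn
              calc lam = lam*1 := by ring
                _ ≤ lam*lam^n := mul_le_mul_of_nonneg_left hlamn hlam0
                _ = lam^(n+1) := by ring
            calc lam * (lam^n * (‖x 0‖^2 + 2*Δt*∑ k ∈ Finset.range n, c k) + 2*Δt*c n)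
                = lam^(n+1) * (‖x 0‖^2 + 2*Δt*∑ k ∈ Finset.range n, c k) + lam*(2*Δt*c n) := by
                  ring
              _ ≤ lam^(n+1) * (‖x 0‖^2 + 2*Δt*∑ k ∈ Finset.range n, c k) + lam^(n+1)*(2*Δt*c n) := by
                  linarith [h2']
              _ = lam^(n+1) * ((‖x 0‖^2 + 2*Δt*∑ k ∈ Finset.range n, c k) + 2*Δt*c n) := by ring
        _ = lam^(n+1) * (‖x 0‖^2 + 2*Δt*((∑ k ∈ Finset.range n, c k) + c n)) := by ring
  have hS : (0:ℝ) ≤ ‖x 0‖^2 + 2*Δt*∑ k ∈ Finset.range N, c k := by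
    have hsum : (0:ℝ) ≤ ∑ k ∈ Finset.range N, c k := Finset.sum_nonneg fun i _ => hc i
    positivity
  have hexp : lam ≤ Real.exp (2*κ*Δt/(1 - 2*κ*Δt)) := by
    have h := Real.add_one_le_exp (2*κ*Δt/(1 - 2*κ*Δt))
    have heq : lam = 2*κ*Δt/(1-2*κ*Δt) + 1 := by
      rw [hlam]; field_simp; ring
    rw [heq]; exact h
  have hpow : lam^N ≤ Real.exp (2*κ*(N:ℝ)*Δt/(1 - 2*κ*Δt)) := by
    calc lam^N ≤ (Real.exp (2*κ*Δt/(1-2*κ*Δt)))^N := pow_le_pow_left₀ hlam0 hexp N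
      _ = Real.exp ((N:ℝ)*(2*κ*Δt/(1-2*κ*Δt))) := by rw [← Real.exp_nat_mul]
      _ = Real.exp (2*κ*(N:ℝ)*Δt/(1-2*κ*Δt)) := by ring_nf
  calc ‖x N‖^2 + 2*α*Δt*∑ k ∈ Finset.range N, ‖x (k+1)‖^2
      ≤ lam^N * (‖x 0‖^2 + 2*Δt*∑ k ∈ Finset.range N, c k) := main N le_rfl
    _ ≤ Real.exp (2*κ*(N:ℝ)*Δt/(1 - 2*κ*Δt)) * (‖x 0‖^2 + 2*Δt*∑ k ∈ Finset.range N, c k) :=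
        mul_le_mul_of_nonneg_right hpow hS
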